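/- arXiv:1412.7979 — 8 statements merged into one kernel-verified Lean document; each statement's English description precedes it below -/
import Mathlib

section
/- Let n ≥ 1, let S ⊆ ℝⁿ be a measurable set that is symmetric (S = -S), and let s > 0. Then for every y ∈ ℝⁿ, the Gaussian measure satisfies γ_s(S + y) ≥ γ_s(S) · exp(-π‖y‖²/s²). -/
open MeasureTheory

/-- The Gaussian measure `γ_s(A) = s^{-n} ∫_A exp(-π‖x‖²/s²) dx`. -/
noncomputable def gaussMeasure (n : ℕ) (s : ℝ) (A : Set (EuclideanSpace ℝ (Fin n))) : ℝ :=
  (s ^ n)⁻¹ * ∫ x in A, Real.exp (-Real.pi * ‖x‖ ^ 2 / s ^ 2)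

/-!
By the parallelogram law, `‖x‖² + ‖y‖² = (‖x + y‖² + ‖x - y‖²) / 2`, so convexity of `exp` gives
`ρ(x) ρ(y) ≤ (ρ(x + y) + ρ(x - y)) / 2` for the Gaussian density `ρ`. Integrating over `S`, the
two terms on the right have the same integral because `S = -S` and `ρ` is even, and the first
one is the integral of `ρ` over `S + y` by translation invariance of Lebesgue measure.
-/

section Translate

variable {G : Type*} [AddGroup G] [MeasurableSpace G] {μ : Measure G}

theorem setIntegral_comp_neg_of_neg_eq [MeasurableNeg G] [μ.IsNegInvariant] {S : Set G}
    (hS : -S = S) (g : G → ℝ) : ∫ x in S, g (-x) ∂μ = ∫ x in S, g x ∂μ := by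
  rw [← (Measure.measurePreserving_neg μ).setIntegral_image_emb
    (MeasurableEquiv.neg G).measurableEmbedding g S, Set.image_neg_eq_neg, hS]

theorem setIntegral_image_add_right [MeasurableAdd G] [μ.IsAddRightInvariant] (S : Set G) (y : G)
    (g : G → ℝ) :
    ∫ x in (· + y) '' S, g x ∂μ = ∫ x in S, g (x + y) ∂μ :=
  (measurePreserving_add_right μ y).setIntegral_image_emb
    (MeasurableEquiv.addRight y).measurableEmbedding g S

end Translate

section Midpoint

variable {G : Type*} [AddCommGroup G] [MeasurableSpace G] {μ : Measure G}

theorem setIntegral_mul_le_setIntegral_image_add_right [MeasurableAdd G] [MeasurableNeg G]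
    [μ.IsAddRightInvariant] [μ.IsNegInvariant]
    {f : G → ℝ} (hf : Integrable f μ) (hf_even : ∀ x, f (-x) = f x) {S : Set G} (hS : -S = S)
    {y : G} {c : ℝ} (hmid : ∀ x, f x * c ≤ (f (x + y) + f (x - y)) / 2) :
    (∫ x in S, f x ∂μ) * c ≤ ∫ x in (· + y) '' S, f x ∂μ := by
  have h_add : Integrable (fun x => f (x + y)) μ := hf.comp_add_right y
  have h_sub : Integrable (fun x => f (x - y)) μ := hf.comp_sub_right y
  have h_reflect : ∫ x in S, f (x - y) ∂μ = ∫ x in S, f (x + y) ∂μ := by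
    rw [← setIntegral_comp_neg_of_neg_eq hS]
    congr 1 with x
    rw [← hf_even, neg_sub, sub_neg_eq_add, add_comm]
  calc (∫ x in S, f x ∂μ) * c = ∫ x in S, f x * c ∂μ := (integral_mul_const c _).symm
    _ ≤ ∫ x in S, (f (x + y) + f (x - y)) / 2 ∂μ :=
      setIntegral_mono (hf.integrableOn.mul_const c)
        ((h_add.add h_sub).div_const 2).integrableOn hmid
    _ = ∫ x in S, f (x + y) ∂μ := by
      rw [integral_div, integral_add h_add.integrableOn h_sub.integrableOn, h_reflect]; ring
    _ = ∫ x in (· + y) '' S, f x ∂μ := (setIntegral_image_add_right S y f).symm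

end Midpoint

section Gaussian

variable {E : Type*} [NormedAddCommGroup E] [InnerProductSpace ℝ E]

theorem exp_neg_mul_norm_sq_mul_le (b : ℝ) (x y : E) :
    Real.exp (-b * ‖x‖ ^ 2) * Real.exp (-b * ‖y‖ ^ 2) ≤
      (Real.exp (-b * ‖x + y‖ ^ 2) + Real.exp (-b * ‖x - y‖ ^ 2)) / 2 := by
  have h_mid : -b * ‖x‖ ^ 2 + -b * ‖y‖ ^ 2 =
      (1 / 2 : ℝ) • (-b * ‖x + y‖ ^ 2) + (1 / 2 : ℝ) • (-b * ‖x - y‖ ^ 2) := by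
    have := parallelogram_law_with_norm ℝ x y
    simp only [smul_eq_mul]; linear_combination (b / 2) * this
  rw [← Real.exp_add, h_mid]
  refine (convexOn_exp.2 (Set.mem_univ _) (Set.mem_univ _) (by norm_num : (0 : ℝ) ≤ 1 / 2)
    (by norm_num : (0 : ℝ) ≤ 1 / 2) (by norm_num)).trans_eq ?_
  simp only [smul_eq_mul]; ring

variable [MeasurableSpace E] [BorelSpace E] [FiniteDimensional ℝ E]

theorem integrable_exp_neg_mul_norm_sq {b : ℝ} (hb : 0 < b) :
    Integrable (fun x : E => Real.exp (-b * ‖x‖ ^ 2)) volume := by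
  have hb' : 0 < (b : ℂ).re := by rwa [Complex.ofReal_re]
  refine (GaussianFourier.integrable_cexp_neg_mul_sq_norm_add hb' 0 (0 : E)).norm.congr
    (.of_forall fun x => ?_)
  simp [Complex.norm_exp, ← Complex.ofReal_pow]

end Gaussian

theorem gaussian_translate_general (n : ℕ) (S : Set (EuclideanSpace ℝ (Fin n)))
    (hsym : S = -S) (s : ℝ) (hs : 0 < s)
    (y : EuclideanSpace ℝ (Fin n)) :
    gaussMeasure n s ((fun x => x + y) '' S) ≥
      gaussMeasure n s S * Real.exp (-Real.pi * ‖y‖ ^ 2 / s ^ 2) := by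
  have h_exponent : ∀ x : EuclideanSpace ℝ (Fin n),
      -Real.pi * ‖x‖ ^ 2 / s ^ 2 = -(Real.pi / s ^ 2) * ‖x‖ ^ 2 := fun x => by ring
  simp only [gaussMeasure, h_exponent, ge_iff_le, mul_assoc]
  gcongr
  exact setIntegral_mul_le_setIntegral_image_add_right
    (integrable_exp_neg_mul_norm_sq (by positivity)) (fun x => by rw [norm_neg]) hsym.symm
    (fun x => exp_neg_mul_norm_sq_mul_le _ x y)

theorem gaussian_translate (n : ℕ) (hn : 1 ≤ n) (S : Set (EuclideanSpace ℝ (Fin n)))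
    (hS : MeasurableSet S) (hsym : S = -S) (s : ℝ) (hs : 0 < s)
    (y : EuclideanSpace ℝ (Fin n)) :
    gaussMeasure n s ((fun x => x + y) '' S) ≥
      gaussMeasure n s S * Real.exp (-Real.pi * ‖y‖ ^ 2 / s ^ 2) :=
  gaussian_translate_general n S hsym s hs y
end

section
/- Let Λ ⊆ ℝⁿ be a full-rank lattice with Voronoi cell V(Λ), and let s > 0. Then 1 - γ_s(V(Λ)) ≤ ρ_{2s}(Λ \ {0}), i.e., the Gaussian measure of the complement of the Voronoi cell is at most the discrete Gaussian mass of the nonzero lattice points at parameter 2s. -/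
/-!
A point outside the Voronoi cell is strictly closer to some `y ∈ Λ \ {0}` than to `0`, so the
complement of `V(Λ)` is covered by the open half-spaces `H_y = {x | ‖x - y‖ < ‖x‖}`. On `H_y` one
has `‖x‖² ≥ ‖x - y/2‖² + ‖y‖²/4`, so the Gaussian mass of `H_y` is at most `ρ_{2s}(y)` times the
total mass `sⁿ` of the Gaussian recentred at `y/2`. A union bound over `y` gives the claim; the
series converges because a lattice is a discrete subgroup, on which `‖z‖ ^ r` is summable for
`r < -n`.
-/

open MeasureTheory

/-- The discrete Gaussian mass `ρ_s(A) = ∑_{x ∈ A} exp(-π‖x‖²/s²)`. -/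
noncomputable def rhoSet (n : ℕ) (s : ℝ) (A : Set (EuclideanSpace ℝ (Fin n))) : ℝ :=
  ∑' x : A, Real.exp (-Real.pi * ‖(x : EuclideanSpace ℝ (Fin n))‖ ^ 2 / s ^ 2)

/-- `Λ` is a full-rank lattice in ℝⁿ: the set of integer combinations of an ℝ-basis. -/
def IsLattice {n : ℕ} (Λ : Set (EuclideanSpace ℝ (Fin n))) : Prop :=
  ∃ b : Module.Basis (Fin n) ℝ (EuclideanSpace ℝ (Fin n)),
    Λ = {x | ∃ z : Fin n → ℤ, x = ∑ i, (z i : ℝ) • b i}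

/-- The (closed) Voronoi cell of a lattice. -/
def voronoiCell {n : ℕ} (Λ : Set (EuclideanSpace ℝ (Fin n))) :
    Set (EuclideanSpace ℝ (Fin n)) :=
  {x | ∀ y ∈ Λ, ‖x‖ ≤ ‖x - y‖}

open Real Filter Asymptotics Module

lemma exp_neg_mul_sq_isBigO_rpow_atTop {a : ℝ} (ha : 0 < a) (r : ℝ) :
    (fun t : ℝ => exp (-a * t ^ 2)) =O[atTop] fun t => t ^ r := by
  refine IsBigO.trans ?_ (isLittleO_exp_neg_mul_rpow_atTop ha r).isBigO
  refine IsBigO.of_bound' (eventually_ge_atTop 1 |>.mono fun t ht => ?_)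
  simp only [norm_eq_abs, abs_exp, exp_le_exp]
  nlinarith [mul_le_mul_of_nonneg_left (show t ≤ t ^ 2 by nlinarith) ha.le]

lemma ZLattice.summable_exp_neg_mul_sq_norm {E : Type*} [NormedAddCommGroup E]
    [NormedSpace ℝ E] [FiniteDimensional ℝ E] (L : Submodule ℤ E) [DiscreteTopology L]
    {a : ℝ} (ha : 0 < a) : Summable fun z : L => exp (-a * ‖(z : E)‖ ^ 2) := by
  have hL : Tendsto (fun z : L => ‖(z : E)‖) cofinite atTop :=
    tendsto_norm_cocompact_atTop.comp <|
      (AddSubgroup.isClosed_of_discrete (H := L.toAddSubgroup)).tendsto_coe_cofinite_of_isDiscrete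
        (isDiscrete_iff_discreteTopology.mpr ‹_›)
  exact summable_of_isBigO (ZLattice.summable_norm_rpow L (-finrank ℤ L - 1) (by linarith))
    ((exp_neg_mul_sq_isBigO_rpow_atTop ha _).comp_tendsto hL)

section Gaussian

variable {E : Type*} [NormedAddCommGroup E] [InnerProductSpace ℝ E]

lemma sq_norm_sub_half_smul_add_le {x y : E} (h : ‖x - y‖ < ‖x‖) :
    ‖x - (2⁻¹ : ℝ) • y‖ ^ 2 + ‖y‖ ^ 2 / 4 ≤ ‖x‖ ^ 2 := by
  have hxy : ‖x - y‖ ^ 2 ≤ ‖x‖ ^ 2 := by gcongr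
  rw [norm_sub_sq_real] at hxy ⊢
  rw [real_inner_smul_right, norm_smul, mul_pow, Real.norm_of_nonneg (by norm_num)]
  nlinarith

variable [FiniteDimensional ℝ E] [MeasurableSpace E] [BorelSpace E]

lemma integral_exp_neg_pi_mul_sq_norm_div_sq {s : ℝ} (hs : 0 < s) :
    ∫ x : E, exp (-π * ‖x‖ ^ 2 / s ^ 2) = s ^ finrank ℝ E := calc
  _ = ∫ x : E, exp (-(π / s ^ 2) * ‖x‖ ^ 2) := by congr with x; ring_nf
  _ = (s ^ 2) ^ (finrank ℝ E / 2 : ℝ) := by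
    rw [GaussianFourier.integral_rexp_neg_mul_sq_norm (by positivity), div_div_cancel₀ pi_ne_zero]
  _ = s ^ finrank ℝ E := by
    rw [← rpow_natCast s 2, ← rpow_mul hs.le, ← rpow_natCast]
    congr 1
    push_cast
    ring

lemma integrable_exp_neg_pi_mul_sq_norm_div_sq {s : ℝ} (hs : 0 < s) :
    Integrable fun x : E => exp (-π * ‖x‖ ^ 2 / s ^ 2) :=
  .of_integral_ne_zero <| by rw [integral_exp_neg_pi_mul_sq_norm_div_sq hs]; positivity

lemma lintegral_gaussian_setOf_norm_sub_lt_le {s : ℝ} (hs : 0 < s) (y : E) :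
    ∫⁻ x in {x | ‖x - y‖ < ‖x‖}, ENNReal.ofReal (exp (-π * ‖x‖ ^ 2 / s ^ 2))
      ≤ ENNReal.ofReal (s ^ finrank ℝ E * exp (-π * ‖y‖ ^ 2 / (2 * s) ^ 2)) := by
  set g : E → ℝ := fun x => exp (-π * ‖x‖ ^ 2 / s ^ 2)
  set c : ℝ := exp (-π * ‖y‖ ^ 2 / (2 * s) ^ 2)
  have hpt : ∀ x ∈ {x : E | ‖x - y‖ < ‖x‖},
      ENNReal.ofReal (g x) ≤ ENNReal.ofReal c * ENNReal.ofReal (g (x - (2⁻¹ : ℝ) • y)) := by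
    intro x hx
    rw [← ENNReal.ofReal_mul (exp_pos _).le, ← exp_add]
    refine ENNReal.ofReal_le_ofReal (exp_le_exp.mpr ?_)
    have key := mul_le_mul_of_nonneg_left (sq_norm_sub_half_smul_add_le hx) pi_pos.le
    have e : -π * ‖y‖ ^ 2 / (2 * s) ^ 2 + -π * ‖x - (2⁻¹ : ℝ) • y‖ ^ 2 / s ^ 2
        = -(π * (‖x - (2⁻¹ : ℝ) • y‖ ^ 2 + ‖y‖ ^ 2 / 4)) / s ^ 2 := by ring
    rw [e, div_le_div_iff_of_pos_right (by positivity)]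
    linarith
  calc ∫⁻ x in {x | ‖x - y‖ < ‖x‖}, ENNReal.ofReal (g x)
      ≤ ∫⁻ x, ENNReal.ofReal c * ENNReal.ofReal (g (x - (2⁻¹ : ℝ) • y)) :=
        (setLIntegral_mono' (measurableSet_lt (by fun_prop) (by fun_prop)) hpt).trans
          (setLIntegral_le_lintegral _ _)
    _ = ENNReal.ofReal c * ENNReal.ofReal (s ^ finrank ℝ E) := by
        rw [lintegral_const_mul' _ _ ENNReal.ofReal_ne_top, lintegral_sub_right_eq_self
          (fun x => ENNReal.ofReal (g x)), ← ofReal_integral_eq_lintegral_ofReal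
          (integrable_exp_neg_pi_mul_sq_norm_div_sq hs) (.of_forall fun _ => (exp_pos _).le),
          integral_exp_neg_pi_mul_sq_norm_div_sq hs]
    _ = _ := by rw [← ENNReal.ofReal_mul (exp_pos _).le, mul_comm]

end Gaussian

section Voronoi

variable {n : ℕ} {Λ : Set (EuclideanSpace ℝ (Fin n))}

lemma IsLattice.countable (hΛ : IsLattice Λ) : Λ.Countable := by
  obtain ⟨b, rfl⟩ := hΛ
  exact (Set.countable_range fun z : Fin n → ℤ => ∑ i, (z i : ℝ) • b i).mono
    (by rintro _ ⟨z, rfl⟩; exact ⟨z, rfl⟩)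

lemma IsLattice.exists_basis_eq_span (hΛ : IsLattice Λ) :
    ∃ b : Basis (Fin n) ℝ (EuclideanSpace ℝ (Fin n)),
      Λ = Submodule.span ℤ (Set.range b) := by
  obtain ⟨b, rfl⟩ := hΛ
  refine ⟨b, Set.ext fun x => ?_⟩
  simp only [Set.mem_ofPred_eq, SetLike.mem_coe, Submodule.mem_span_range_iff_exists_fun,
    Int.cast_smul_eq_zsmul, eq_comm]

lemma IsLattice.summable_exp_neg_mul_sq_norm (hΛ : IsLattice Λ) {a : ℝ} (ha : 0 < a) :
    Summable fun y : Λ => exp (-a * ‖(y : EuclideanSpace ℝ (Fin n))‖ ^ 2) := by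
  obtain ⟨b, rfl⟩ := hΛ.exists_basis_eq_span
  exact ZLattice.summable_exp_neg_mul_sq_norm _ ha

lemma isClosed_voronoiCell (Λ : Set (EuclideanSpace ℝ (Fin n))) : IsClosed (voronoiCell Λ) := by
  simp only [voronoiCell, Set.ofPred_forall]
  exact isClosed_biInter fun y _ => isClosed_le (by fun_prop) (by fun_prop)

lemma compl_voronoiCell_subset_iUnion (Λ : Set (EuclideanSpace ℝ (Fin n))) :
    (voronoiCell Λ)ᶜ ⊆ ⋃ y : ↥(Λ \ {0}), {x | ‖x - y‖ < ‖x‖} := by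
  intro x hx
  obtain ⟨y, hy, hxy⟩ : ∃ y ∈ Λ, ‖x - y‖ < ‖x‖ := by simpa [voronoiCell] using hx
  have hy0 : y ≠ 0 := by rintro rfl; simp at hxy
  exact Set.mem_iUnion.mpr ⟨⟨y, hy, hy0⟩, hxy⟩

lemma lintegral_gaussian_compl_voronoiCell_le (hΛ : Λ.Countable) {s : ℝ} (hs : 0 < s) :
    ∫⁻ x in (voronoiCell Λ)ᶜ, ENNReal.ofReal (exp (-π * ‖x‖ ^ 2 / s ^ 2))
      ≤ ∑' y : ↥(Λ \ {0}),
          ENNReal.ofReal (s ^ n * exp (-π * ‖(y : EuclideanSpace ℝ (Fin n))‖ ^ 2 / (2 * s) ^ 2)) := by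
  have : Countable ↥(Λ \ {0}) := (hΛ.mono Set.sdiff_subset).to_subtype
  refine (lintegral_mono_set (compl_voronoiCell_subset_iUnion Λ)).trans <|
    (lintegral_iUnion_le _ _).trans <| ENNReal.tsum_le_tsum fun y => ?_
  simpa only [finrank_euclideanSpace_fin] using
    lintegral_gaussian_setOf_norm_sub_lt_le hs (y : EuclideanSpace ℝ (Fin n))

end Voronoi

theorem voronoi_gaussian_upper (n : ℕ) (Λ : Set (EuclideanSpace ℝ (Fin n)))
    (hΛ : IsLattice Λ) (s : ℝ) (hs : 0 < s) :
    1 - gaussMeasure n s (voronoiCell Λ) ≤ rhoSet n (2 * s) (Λ \ {0}) := by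
  set f : EuclideanSpace ℝ (Fin n) → ℝ := fun x => exp (-π * ‖x‖ ^ 2 / s ^ 2)
  have hsum : Summable fun y : ↥(Λ \ {0}) =>
      exp (-π * ‖(y : EuclideanSpace ℝ (Fin n))‖ ^ 2 / (2 * s) ^ 2) := by
    refine ((hΛ.summable_exp_neg_mul_sq_norm (a := π / (2 * s) ^ 2) (by positivity)
      ).comp_injective (Set.inclusion_injective Set.sdiff_subset)).congr fun y => ?_
    simp only [Function.comp_apply]
    ring_nf
  have hcompl : ∫ x in (voronoiCell Λ)ᶜ, f x ≤ s ^ n * rhoSet n (2 * s) (Λ \ {0}) := by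
    rw [integral_eq_lintegral_of_nonneg_ae (.of_forall fun _ => (exp_pos _).le)
      (integrable_exp_neg_pi_mul_sq_norm_div_sq hs).aestronglyMeasurable.restrict, rhoSet,
      ← tsum_mul_left]
    refine ENNReal.toReal_le_of_le_ofReal (by positivity) ?_
    rw [ENNReal.ofReal_tsum_of_nonneg (fun _ => by positivity) (hsum.mul_left _)]
    exact lintegral_gaussian_compl_voronoiCell_le hΛ.countable hs
  have htotal := integral_add_compl (isClosed_voronoiCell Λ).measurableSet
    (integrable_exp_neg_pi_mul_sq_norm_div_sq hs)
  rw [integral_exp_neg_pi_mul_sq_norm_div_sq hs, finrank_euclideanSpace_fin] at htotal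
  have hsn : 0 < s ^ n := by positivity
  rw [gaussMeasure, sub_le_iff_le_add, ← mul_le_mul_iff_of_pos_left hsn, mul_add,
    mul_inv_cancel_left₀ hsn.ne', mul_one]
  linarith
end

section
/- Let Λ ⊆ ℝⁿ be a full-rank lattice and s > 0, and suppose ρ_s(Λ \ {0}) ≤ ε for some 0 < ε < 1. For any r ≥ 1, let t = sqrt(1 + log(r)/log(1/ε)). Then ρ_{s/t}(Λ \ {0}) ≤ (1/r) · ρ_s(Λ \ {0}) ≤ ε/r. -/
/-!
Every term `ρ_s(x)`, `x ∈ Λ \ {0}`, is at most `ρ_s(Λ \ {0}) ≤ ε`, and `ρ_{s/t}(x) = ρ_s(x) ^ (t²)`.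
Hence `ρ_{s/t}(x) = ρ_s(x) · ρ_s(x) ^ (t² - 1) ≤ ρ_s(x) · ε ^ (log r / log (1/ε)) = ρ_s(x) / r`,
and summing over `x` gives the claim. The sums converge because `exp (-c ‖z‖²)` is dominated by a
multiple of `‖z‖⁻ᵏ` for every `k`, which is summable on a lattice once `k` exceeds its rank.
-/

open MeasureTheory

open Real

lemma Real.exp_neg_le_factorial_div_pow {x : ℝ} (hx : 0 < x) (k : ℕ) :
    exp (-x) ≤ k.factorial / x ^ k := by
  rw [exp_neg, inv_le_comm₀ (exp_pos x) (by positivity), inv_div]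
  exact pow_div_factorial_le_exp _ hx.le k

lemma ZLattice.summable_exp_neg_mul_norm_sq {E : Type*} [NormedAddCommGroup E] [NormedSpace ℝ E]
    [FiniteDimensional ℝ E] (L : Submodule ℤ E) [DiscreteTopology L] {c : ℝ} (hc : 0 < c) :
    Summable fun z : L => exp (-c * ‖z‖ ^ 2) := by
  set k := Module.finrank ℤ L + 1
  refine ((summable_norm_pow_inv L (2 * k) (by omega)).mul_left (k.factorial / c ^ k))
    |>.of_norm_bounded_eventually ?_
  filter_upwards [(Set.finite_singleton (0 : L)).compl_mem_cofinite] with z hz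
  have hz : 0 < ‖z‖ := norm_pos_iff.mpr hz
  rw [norm_of_nonneg (exp_nonneg _), neg_mul]
  calc exp (-(c * ‖z‖ ^ 2)) ≤ k.factorial / (c * ‖z‖ ^ 2) ^ k :=
        exp_neg_le_factorial_div_pow (by positivity) k
    _ = k.factorial / c ^ k * ‖z‖⁻¹ ^ (2 * k) := by
        rw [mul_pow, ← pow_mul, inv_pow]
        field_simp

lemma IsLattice.eq_span {n : ℕ} {Λ : Set (EuclideanSpace ℝ (Fin n))} (hΛ : IsLattice Λ) :
    ∃ b : Module.Basis (Fin n) ℝ (EuclideanSpace ℝ (Fin n)),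
      Λ = Submodule.span ℤ (Set.range b) := by
  obtain ⟨b, rfl⟩ := hΛ
  refine ⟨b, Set.ext fun x => ?_⟩
  simp only [Set.mem_ofPred_eq, SetLike.mem_coe, Submodule.mem_span_range_iff_exists_fun,
    Int.cast_smul_eq_zsmul, eq_comm]

lemma IsLattice.summable_exp_neg_mul_norm_sq {n : ℕ} {Λ : Set (EuclideanSpace ℝ (Fin n))}
    (hΛ : IsLattice Λ) {A : Set (EuclideanSpace ℝ (Fin n))} (hA : A ⊆ Λ) {c : ℝ} (hc : 0 < c) :
    Summable fun x : A => exp (-c * ‖(x : EuclideanSpace ℝ (Fin n))‖ ^ 2) := by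
  obtain ⟨b, rfl⟩ := hΛ.eq_span
  set L := Submodule.span ℤ (Set.range b)
  let i : A → L := fun x => ⟨x, hA x.2⟩
  have hi : Function.Injective i := fun x y h => by simpa [i, Subtype.ext_iff] using h
  have hsum := (ZLattice.summable_exp_neg_mul_norm_sq L hc).comp_injective hi
  exact hsum

lemma Real.exp_mul_one_add_log_div_log_le {b ε r : ℝ} (hε0 : 0 < ε) (hε1 : ε < 1) (hr : 1 ≤ r)
    (hb : exp b ≤ ε) : exp (b * (1 + log r / log (1 / ε))) ≤ exp b / r := by
  have hlogε : 0 < log (1 / ε) := log_pos (one_lt_one_div hε0 hε1)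
  have hq : 0 ≤ log r / log (1 / ε) := div_nonneg (log_nonneg hr) hlogε.le
  have hb' : b ≤ -log (1 / ε) := by
    rw [one_div, log_inv, neg_neg, ← exp_le_exp, exp_log hε0]
    exact hb
  have hbq : b * (log r / log (1 / ε)) ≤ -log r :=
    calc b * (log r / log (1 / ε)) ≤ -log (1 / ε) * (log r / log (1 / ε)) :=
          mul_le_mul_of_nonneg_right hb' hq
      _ = -log r := by field_simp
  calc exp (b * (1 + log r / log (1 / ε))) ≤ exp (b + -log r) := by
        gcongr
        linarith
    _ = exp b / r := by rw [exp_add, exp_neg, exp_log (by linarith), div_eq_mul_inv]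

lemma tsum_exp_mul_one_add_log_div_log_le {ι : Type*} {b : ι → ℝ} {ε r : ℝ} (hε0 : 0 < ε)
    (hε1 : ε < 1) (hr : 1 ≤ r) (hsum : Summable fun i => exp (b i))
    (hε : ∑' i, exp (b i) ≤ ε) :
    ∑' i, exp (b i * (1 + log r / log (1 / ε))) ≤ (∑' i, exp (b i)) / r := by
  have hterm i : exp (b i * (1 + log r / log (1 / ε))) ≤ exp (b i) / r :=
    exp_mul_one_add_log_div_log_le hε0 hε1 hr
      ((hsum.le_tsum i fun j _ => (exp_pos (b j)).le).trans hε)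
  rw [← tsum_div_const]
  exact Summable.tsum_le_tsum hterm
    ((hsum.div_const r).of_nonneg_of_le (fun i => (exp_pos _).le) hterm) (hsum.div_const r)

theorem rho_small_eps (n : ℕ) (Λ : Set (EuclideanSpace ℝ (Fin n))) (hΛ : IsLattice Λ)
    (s ε : ℝ) (hs : 0 < s) (hε0 : 0 < ε) (hε1 : ε < 1)
    (hρ : rhoSet n s (Λ \ {0}) ≤ ε) (r : ℝ) (hr : 1 ≤ r) :
    rhoSet n (s / Real.sqrt (1 + Real.log r / Real.log (1 / ε))) (Λ \ {0}) ≤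
        (1 / r) * rhoSet n s (Λ \ {0}) ∧
      (1 / r) * rhoSet n s (Λ \ {0}) ≤ ε / r := by
  set T := 1 + log r / log (1 / ε)
  have hT : 0 ≤ T :=
    add_nonneg zero_le_one (div_nonneg (log_nonneg hr) (log_pos (one_lt_one_div hε0 hε1)).le)
  have hsum : Summable fun x : ↥(Λ \ {0}) =>
      exp (-π * ‖(x : EuclideanSpace ℝ (Fin n))‖ ^ 2 / s ^ 2) :=
    (hΛ.summable_exp_neg_mul_norm_sq Set.sdiff_subset (div_pos pi_pos (pow_pos hs 2))).congr
      fun x => by ring_nf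
  rw [one_div_mul_eq_div]
  refine ⟨?_, div_le_div_of_nonneg_right hρ (by linarith)⟩
  calc rhoSet n (s / √T) (Λ \ {0})
      = ∑' x : ↥(Λ \ {0}), exp (-π * ‖(x : EuclideanSpace ℝ (Fin n))‖ ^ 2 / s ^ 2 * T) := by
        refine tsum_congr fun x => ?_
        rw [div_pow, sq_sqrt hT, div_div_eq_mul_div]
        ring_nf
    _ ≤ rhoSet n s (Λ \ {0}) / r := tsum_exp_mul_one_add_log_div_log_le hε0 hε1 hr hsum hρ
end

section
/- Let n ≥ 1, s > 0, and ε > 0. Then s^{-n} · ∫_{{x ∈ ℝⁿ : ‖x‖² ≥ (1+ε)·s²·n/(2π)}} exp(-π‖x‖²/s²) dx ≤ ((1+ε)·e^{-ε})^{n/2}. In other words, if X is distributed according to the Gaussian density s^{-n}exp(-π‖x‖²/s²) on ℝⁿ, then Pr[‖X‖² ≥ (1+ε)s²n/(2π)] ≤ ((1+ε)e^{-ε})^{n/2}. -/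
/-! Chernoff's method: on the tail `t ≤ ‖x‖²` one has
`exp (-a‖x‖²) ≤ exp (-(a - b) t) · exp (-b‖x‖²)` for any `0 < b ≤ a`, and the flatter Gaussian
`exp (-b‖x‖²)` integrates to `(π / b)^(n/2)` over the whole space. With `a = π / s²` the choice
`b = π / ((1 + ε) s²)` (the optimal one) turns the bound into `((1 + ε) e^{-ε})^{n/2}`. -/

open MeasureTheory Real

section InnerProductSpace

variable {V : Type*} [NormedAddCommGroup V] [InnerProductSpace ℝ V] [FiniteDimensional ℝ V]
  [MeasurableSpace V] [BorelSpace V]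

theorem integrable_exp_neg_mul_sq_norm {b : ℝ} (hb : 0 < b) :
    Integrable (fun v : V ↦ exp (-b * ‖v‖ ^ 2)) :=
  Integrable.of_integral_ne_zero <| by
    rw [GaussianFourier.integral_rexp_neg_mul_sq_norm hb]; positivity

theorem setIntegral_exp_neg_mul_sq_norm_le {a b : ℝ} (hb : 0 < b) (hba : b ≤ a) (t : ℝ) :
    ∫ v in {v : V | t ≤ ‖v‖ ^ 2}, exp (-a * ‖v‖ ^ 2) ≤
      exp (-(a - b) * t) * (π / b) ^ (Module.finrank ℝ V / 2 : ℝ) := by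
  have hdom : ∀ v ∈ {v : V | t ≤ ‖v‖ ^ 2},
      exp (-a * ‖v‖ ^ 2) ≤ exp (-(a - b) * t) * exp (-b * ‖v‖ ^ 2) := by
    intro v hv
    rw [← exp_add, exp_le_exp]
    nlinarith [mul_le_mul_of_nonneg_left (show t ≤ ‖v‖ ^ 2 from hv) (sub_nonneg.2 hba)]
  have hint := (integrable_exp_neg_mul_sq_norm (V := V) hb).const_mul (exp (-(a - b) * t))
  calc ∫ v in {v : V | t ≤ ‖v‖ ^ 2}, exp (-a * ‖v‖ ^ 2)
      ≤ ∫ v in {v : V | t ≤ ‖v‖ ^ 2}, exp (-(a - b) * t) * exp (-b * ‖v‖ ^ 2) :=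
        setIntegral_mono_on (integrable_exp_neg_mul_sq_norm (hb.trans_le hba)).integrableOn
          hint.integrableOn (measurableSet_le measurable_const (by fun_prop)) hdom
    _ ≤ ∫ v, exp (-(a - b) * t) * exp (-b * ‖v‖ ^ 2) :=
        setIntegral_le_integral hint (ae_of_all _ fun _ ↦ by positivity)
    _ = exp (-(a - b) * t) * (π / b) ^ (Module.finrank ℝ V / 2 : ℝ) := by
        rw [integral_const_mul, GaussianFourier.integral_rexp_neg_mul_sq_norm hb]

end InnerProductSpace

theorem gaussian_norm_tail_general (n : ℕ) (s : ℝ) (hs : 0 < s) (ε : ℝ) (hε : 0 < ε) :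
    (s ^ n)⁻¹ *
        ∫ x in {x : EuclideanSpace ℝ (Fin n) |
            ‖x‖ ^ 2 ≥ (1 + ε) * s ^ 2 * n / (2 * Real.pi)},
          Real.exp (-Real.pi * ‖x‖ ^ 2 / s ^ 2) ≤
      ((1 + ε) * Real.exp (-ε)) ^ ((n : ℝ) / 2) := by
  have hbound := setIntegral_exp_neg_mul_sq_norm_le (V := EuclideanSpace ℝ (Fin n))
    (a := π / s ^ 2) (b := π / ((1 + ε) * s ^ 2)) (by positivity)
    (div_le_div_of_nonneg_left pi_pos.le (by positivity) (by nlinarith [sq_pos_of_pos hs]))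
    ((1 + ε) * s ^ 2 * n / (2 * π))
  have hexponent : -(π / s ^ 2 - π / ((1 + ε) * s ^ 2)) * ((1 + ε) * s ^ 2 * n / (2 * π))
      = -ε * (n / 2) := by
    field_simp; ring
  have hscale : π / (π / ((1 + ε) * s ^ 2)) = (1 + ε) * s ^ 2 := by
    field_simp
  have hsn : (s ^ 2) ^ ((n : ℝ) / 2) = s ^ n := by
    rw [rpow_div_two_eq_sqrt _ (sq_nonneg s), sqrt_sq hs.le, rpow_natCast]
  have hintegrand : ∀ x : EuclideanSpace ℝ (Fin n),
      -π * ‖x‖ ^ 2 / s ^ 2 = -(π / s ^ 2) * ‖x‖ ^ 2 := fun x ↦ by ring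
  simp only [finrank_euclideanSpace_fin, hexponent, hscale] at hbound
  simp only [hintegrand]
  calc _ ≤ (s ^ n)⁻¹ * (exp (-ε * (n / 2)) * ((1 + ε) * s ^ 2) ^ ((n : ℝ) / 2)) :=
        mul_le_mul_of_nonneg_left hbound (by positivity)
    _ = ((1 + ε) * exp (-ε)) ^ ((n : ℝ) / 2) := by
        rw [mul_rpow (by positivity) (by positivity), mul_rpow (by positivity) (by positivity),
          hsn, exp_mul]
        field_simp

theorem gaussian_norm_tail (n : ℕ) (hn : 1 ≤ n) (s : ℝ) (hs : 0 < s) (ε : ℝ) (hε : 0 < ε) :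
    (s ^ n)⁻¹ *
        ∫ x in {x : EuclideanSpace ℝ (Fin n) |
            ‖x‖ ^ 2 ≥ (1 + ε) * s ^ 2 * n / (2 * Real.pi)},
          Real.exp (-Real.pi * ‖x‖ ^ 2 / s ^ 2) ≤
      ((1 + ε) * Real.exp (-ε)) ^ ((n : ℝ) / 2) :=
  gaussian_norm_tail_general n s hs ε hε
end

section
/- Let n ≥ 1, r > 0, and set s = r·sqrt(2π/n). Then for every y ∈ ℝⁿ, vol(rB ∩ (y + rB)) / vol(rB) ≤ 2·exp(-π‖y‖²/(4s²)), where rB denotes the closed Euclidean ball of radius r centered at the origin in ℝⁿ and vol denotes Lebesgue measure. -/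
/-!
The lens `closedBall 0 r ∩ closedBall y r` lies in the ball around the midpoint `y / 2` of radius
`√(r² - ‖y‖² / 4)` (Apollonius), so by scaling its volume is at most `(1 - ‖y‖² / (4 r²)) ^ (n / 2)`
times that of `closedBall 0 r`, and `1 - u ≤ exp (-u)` turns this into `exp (-n ‖y‖² / (8 r²))`,
which is `exp (-π ‖y‖² / (4 s²))`.
-/

open MeasureTheory Metric Module

theorem closedBall_inter_closedBall_subset_closedBall_midpoint {E : Type*}
    [NormedAddCommGroup E] [InnerProductSpace ℝ E] (x y : E) (r : ℝ) :
    closedBall x r ∩ closedBall y r ⊆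
      closedBall (midpoint ℝ x y) (√(r ^ 2 - (dist x y / 2) ^ 2)) := by
  rintro z ⟨hx, hy⟩
  rw [mem_closedBall] at hx hy ⊢
  have apollonius :=
    EuclideanGeometry.dist_sq_add_dist_sq_eq_two_mul_dist_midpoint_sq_add_half_dist_sq z x y
  apply Real.le_sqrt_of_sq_le
  nlinarith [pow_le_pow_left₀ dist_nonneg hx 2, pow_le_pow_left₀ dist_nonneg hy 2]

theorem measureReal_div_measureReal_closedBall_le {E : Type*} [NormedAddCommGroup E]
    [NormedSpace ℝ E] [FiniteDimensional ℝ E] [MeasurableSpace E] [BorelSpace E]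
    (μ : Measure E) [μ.IsAddHaarMeasure] {s : Set E} {x : E} {a r : ℝ} (ha : 0 ≤ a)
    (hr : 0 < r) (hs : s ⊆ closedBall x a) (c : E) :
    μ.real s / μ.real (closedBall c r) ≤ (a / r) ^ finrank ℝ E := by
  have hball : 0 < μ.real (closedBall c r) :=
    ENNReal.toReal_pos (measure_closedBall_pos μ c hr).ne' measure_closedBall_lt_top.ne
  rw [div_le_iff₀ hball]
  calc μ.real s ≤ μ.real (closedBall x a) := measureReal_mono hs measure_closedBall_lt_top.ne
    _ = (a / r) ^ finrank ℝ E * μ.real (closedBall c r) := by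
      rw [Measure.addHaar_real_closedBall' μ x ha, Measure.addHaar_real_closedBall' μ c hr.le,
        div_pow]
      field_simp

theorem Real.sqrt_sq_sub_sq_div_le_exp {r : ℝ} (hr : 0 < r) (t : ℝ) :
    √(r ^ 2 - t ^ 2) / r ≤ Real.exp (-(t ^ 2 / (2 * r ^ 2))) := by
  rw [div_le_iff₀ hr, Real.sqrt_le_iff]
  refine ⟨by positivity, ?_⟩
  have hsq : (Real.exp (-(t ^ 2 / (2 * r ^ 2))) * r) ^ 2 = Real.exp (-(t ^ 2 / r ^ 2)) * r ^ 2 := by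
    rw [mul_pow, ← Real.exp_nat_mul]
    congr 2
    field_simp
    ring
  have hlin : r ^ 2 - t ^ 2 = (-(t ^ 2 / r ^ 2) + 1) * r ^ 2 := by
    field_simp
    ring
  rw [hsq, hlin]
  gcongr
  exact Real.add_one_le_exp _

theorem ball_intersection_volume_general (n : ℕ) (r : ℝ) (hr : 0 < r)
    (s : ℝ) (hsdef : s = r * Real.sqrt (2 * Real.pi / n))
    (y : EuclideanSpace ℝ (Fin n)) :
    (volume (Metric.closedBall (0 : EuclideanSpace ℝ (Fin n)) r ∩
        Metric.closedBall y r)).toReal /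
      (volume (Metric.closedBall (0 : EuclideanSpace ℝ (Fin n)) r)).toReal ≤
    2 * Real.exp (-Real.pi * ‖y‖ ^ 2 / (4 * s ^ 2)) := by
  have hratio := measureReal_div_measureReal_closedBall_le volume (Real.sqrt_nonneg _) hr
    (closedBall_inter_closedBall_subset_closedBall_midpoint 0 y r) 0
  rw [finrank_euclideanSpace_fin, dist_zero_left] at hratio
  -- for `n = 0` both sides vanish, since then `s = 0` and `x / 0 = 0`
  have hexponent : n * -((‖y‖ / 2) ^ 2 / (2 * r ^ 2)) = -Real.pi * ‖y‖ ^ 2 / (4 * s ^ 2) := by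
    rw [hsdef, mul_pow, Real.sq_sqrt (by positivity)]
    rcases n.eq_zero_or_pos with rfl | hn
    · simp
    · field_simp
      ring
  calc _ ≤ (√(r ^ 2 - (‖y‖ / 2) ^ 2) / r) ^ n := hratio
    _ ≤ Real.exp (-((‖y‖ / 2) ^ 2 / (2 * r ^ 2))) ^ n :=
      pow_le_pow_left₀ (by positivity) (Real.sqrt_sq_sub_sq_div_le_exp hr _) n
    _ = Real.exp (-Real.pi * ‖y‖ ^ 2 / (4 * s ^ 2)) := by rw [← Real.exp_nat_mul, hexponent]
    _ ≤ 2 * Real.exp (-Real.pi * ‖y‖ ^ 2 / (4 * s ^ 2)) := by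
      linarith [Real.exp_pos (-Real.pi * ‖y‖ ^ 2 / (4 * s ^ 2))]

theorem ball_intersection_volume (n : ℕ) (hn : 1 ≤ n) (r : ℝ) (hr : 0 < r)
    (s : ℝ) (hsdef : s = r * Real.sqrt (2 * Real.pi / n))
    (y : EuclideanSpace ℝ (Fin n)) :
    (volume (Metric.closedBall (0 : EuclideanSpace ℝ (Fin n)) r ∩
        Metric.closedBall y r)).toReal /
      (volume (Metric.closedBall (0 : EuclideanSpace ℝ (Fin n)) r)).toReal ≤
    2 * Real.exp (-Real.pi * ‖y‖ ^ 2 / (4 * s ^ 2)) :=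
  ball_intersection_volume_general n r hr s hsdef y
end

section
/- Let K ⊆ ℝⁿ be a convex set containing the origin, and let r, s > 0. Then γ_s(rB \ K) / γ_s(rB) ≤ vol(rB \ K) / vol(rB); equivalently, γ_s(rB \ K) · vol(rB) ≤ vol(rB \ K) · γ_s(rB). That is, the Gaussian measure restricted to the ball rB assigns no more relative mass to the complement of K than the uniform measure on rB does. -/
/-!
By the layer-cake formula, `∫_S f = ∫_{t > 0} vol({f ≥ t} ∩ S) dt`, and the superlevel sets of the
Gaussian density are centred balls `ρB`. It therefore suffices to show
`vol(ρB ∩ (rB \ K)) · vol(rB) ≤ vol(ρB ∩ rB) · vol(rB \ K)` for every `ρ`, i.e. that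
`vol(ρB \ K) / vol(ρB)` is nondecreasing in `ρ`. Since `K` is star-shaped at `0`,
`ρB \ K ⊆ (ρ / r) • (rB \ K)` for `ρ ≤ r`, and scaling by `ρ / r` multiplies the volumes of both
sets by the same factor `(ρ / r)ⁿ`.
-/

open MeasureTheory

open Metric Set Pointwise

section LayerCake

variable {α : Type*} [MeasurableSpace α] {μ : Measure α} {f : α → ℝ} {A B : Set α}

theorem setLIntegral_mul_measure_le_of_superlevel (hf_nonneg : 0 ≤ f) (hf : Measurable f)
    (h : ∀ t > 0, μ ({x | t ≤ f x} ∩ A) * μ B ≤ μ ({x | t ≤ f x} ∩ B) * μ A) :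
    (∫⁻ x in A, ENNReal.ofReal (f x) ∂μ) * μ B ≤ (∫⁻ x in B, ENNReal.ofReal (f x) ∂μ) * μ A := by
  have layercake : ∀ S : Set α, ∫⁻ x in S, ENNReal.ofReal (f x) ∂μ =
      ∫⁻ t in Ioi 0, μ ({x | t ≤ f x} ∩ S) := fun S => by
    rw [lintegral_eq_lintegral_meas_le _ (.of_forall hf_nonneg) hf.aemeasurable]
    exact lintegral_congr fun t => Measure.restrict_apply (measurableSet_le measurable_const hf)
  have hB_anti : Antitone fun t => μ ({x | t ≤ f x} ∩ B) := fun t t' htt' =>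
    measure_mono <| inter_subset_inter_left _ fun _ hx => htt'.trans hx
  rw [layercake, layercake, ← lintegral_mul_const _ hB_anti.measurable]
  exact (lintegral_mul_const_le _ _).trans
    (setLIntegral_mono (hB_anti.measurable.mul_const _) h)

theorem setIntegral_mul_measureReal_le_of_superlevel (hf_nonneg : 0 ≤ f) (hf : Measurable f)
    (hfB : IntegrableOn f B μ) (hA : μ A ≠ ⊤)
    (h : ∀ t > 0, μ ({x | t ≤ f x} ∩ A) * μ B ≤ μ ({x | t ≤ f x} ∩ B) * μ A) :
    (∫ x in A, f x ∂μ) * μ.real B ≤ (∫ x in B, f x ∂μ) * μ.real A := by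
  have toLIntegral : ∀ S : Set α, ∫ x in S, f x ∂μ = (∫⁻ x in S, ENNReal.ofReal (f x) ∂μ).toReal :=
    fun S => integral_eq_lintegral_of_nonneg_ae (.of_forall hf_nonneg) hf.aestronglyMeasurable
  rw [toLIntegral, toLIntegral, measureReal_def, measureReal_def, ← ENNReal.toReal_mul,
    ← ENNReal.toReal_mul]
  exact ENNReal.toReal_mono (ENNReal.mul_ne_top hfB.lintegral_lt_top.ne hA)
    (setLIntegral_mul_measure_le_of_superlevel hf_nonneg hf h)

end LayerCake

section StarConvex

variable {E : Type*} [NormedAddCommGroup E] [NormedSpace ℝ E] {K : Set E}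

theorem StarConvex.closedBall_mul_diff_subset_smul (hK : StarConvex ℝ 0 K) (h0 : (0 : E) ∈ K)
    {c : ℝ} (hc₀ : 0 ≤ c) (hc₁ : c ≤ 1) (r : ℝ) :
    closedBall (0 : E) (c * r) \ K ⊆ c • (closedBall 0 r \ K) := by
  rintro x ⟨hx, hxK⟩
  rcases hc₀.eq_or_lt with rfl | hc
  · rw [zero_mul, closedBall_zero, mem_singleton_iff] at hx
    exact absurd (hx ▸ h0) hxK
  refine ⟨c⁻¹ • x, ⟨?_, fun hK' => hxK ?_⟩, smul_inv_smul₀ hc.ne' x⟩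
  · rw [mem_closedBall_zero_iff, norm_smul, norm_inv, Real.norm_of_nonneg hc.le,
      inv_mul_le_iff₀ hc]
    exact mem_closedBall_zero_iff.mp hx
  · simpa [smul_inv_smul₀ hc.ne'] using hK.smul_mem hK' hc.le hc₁

variable [MeasurableSpace E] [BorelSpace E] [FiniteDimensional ℝ E] (μ : Measure E)
  [μ.IsAddHaarMeasure]

theorem StarConvex.measure_closedBall_diff_mul_le (hK : StarConvex ℝ 0 K) (h0 : (0 : E) ∈ K)
    {ρ r : ℝ} (hρr : ρ ≤ r) (hr : 0 < r) :
    μ (closedBall 0 ρ \ K) * μ (closedBall 0 r) ≤ μ (closedBall 0 ρ) * μ (closedBall 0 r \ K) := by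
  rcases lt_or_ge ρ 0 with hρ | hρ
  · simp [closedBall_eq_empty.mpr hρ]
  set c := ρ / r
  have hcr : c * r = ρ := div_mul_cancel₀ ρ hr.ne'
  have hball : closedBall (0 : E) ρ = c • closedBall 0 r := by
    rw [smul_closedBall _ _ hr.le, smul_zero, Real.norm_of_nonneg (by positivity), hcr]
  calc μ (closedBall 0 ρ \ K) * μ (closedBall 0 r)
      ≤ μ (c • (closedBall 0 r \ K)) * μ (closedBall 0 r) := by
        gcongr
        rw [← hcr]
        exact hK.closedBall_mul_diff_subset_smul h0 (by positivity) ((div_le_one hr).mpr hρr) r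
    _ = μ (closedBall 0 ρ) * μ (closedBall 0 r \ K) := by
        rw [hball, Measure.addHaar_smul, Measure.addHaar_smul]
        ring

theorem StarConvex.measure_inter_closedBall_diff_mul_le (hK : StarConvex ℝ 0 K)
    (h0 : (0 : E) ∈ K) (ρ : ℝ) {r : ℝ} (hr : 0 < r) :
    μ (closedBall 0 ρ ∩ (closedBall 0 r \ K)) * μ (closedBall 0 r) ≤
      μ (closedBall 0 ρ ∩ closedBall 0 r) * μ (closedBall 0 r \ K) := by
  rcases le_total ρ r with hρr | hrρ
  · have hsub := closedBall_subset_closedBall (x := (0 : E)) hρr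
    rw [← inter_sdiff_assoc, inter_eq_left.mpr hsub]
    exact hK.measure_closedBall_diff_mul_le μ h0 hρr hr
  · have hsub := closedBall_subset_closedBall (x := (0 : E)) hrρ
    rw [inter_eq_right.mpr (sdiff_subset.trans hsub), inter_eq_right.mpr hsub, mul_comm]

end StarConvex

theorem exists_setOf_sq_norm_le_eq_closedBall {E : Type*} [SeminormedAddCommGroup E] (R : ℝ) :
    ∃ ρ, {x : E | ‖x‖ ^ 2 ≤ R} = closedBall 0 ρ := by
  rcases le_or_gt 0 R with hR | hR
  · exact ⟨√R, by ext x; simp [Real.le_sqrt (norm_nonneg x) hR]⟩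
  · refine ⟨-1, ?_⟩
    rw [closedBall_eq_empty.mpr (by norm_num), eq_empty_iff_forall_notMem]
    exact fun x hx => (hR.trans_le (sq_nonneg ‖x‖)).not_ge hx

theorem exists_setOf_le_exp_neg_mul_sq_norm_eq_closedBall {E : Type*} [SeminormedAddCommGroup E]
    {b : ℝ} (hb : 0 < b) {t : ℝ} (ht : 0 < t) :
    ∃ ρ, {x : E | t ≤ Real.exp (-b * ‖x‖ ^ 2)} = closedBall 0 ρ := by
  obtain ⟨ρ, hρ⟩ := exists_setOf_sq_norm_le_eq_closedBall (E := E) (-Real.log t / b)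
  refine ⟨ρ, hρ ▸ ?_⟩
  ext x
  rw [mem_ofPred_eq, mem_ofPred_eq, ← Real.log_le_iff_le_exp ht, le_div_iff₀ hb]
  constructor <;> intro <;> linarith

theorem gaussian_uniform_transfer (n : ℕ) (K : Set (EuclideanSpace ℝ (Fin n)))
    (hK : Convex ℝ K) (h0 : (0 : EuclideanSpace ℝ (Fin n)) ∈ K)
    (r s : ℝ) (hr : 0 < r) (hs : 0 < s) :
    gaussMeasure n s (Metric.closedBall 0 r \ K) /
        gaussMeasure n s (Metric.closedBall (0 : EuclideanSpace ℝ (Fin n)) r) ≤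
      (volume (Metric.closedBall (0 : EuclideanSpace ℝ (Fin n)) r \ K)).toReal /
        (volume (Metric.closedBall (0 : EuclideanSpace ℝ (Fin n)) r)).toReal := by
  set B := closedBall (0 : EuclideanSpace ℝ (Fin n)) r
  set f := fun x : EuclideanSpace ℝ (Fin n) => Real.exp (-(Real.pi / s ^ 2) * ‖x‖ ^ 2)
  have hgauss : ∀ S, gaussMeasure n s S = (s ^ n)⁻¹ * ∫ x in S, f x := fun S => by
    simp only [gaussMeasure, f, neg_mul, neg_div, div_mul_eq_mul_div]
  have hf : Continuous f := by fun_prop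
  have hfB : IntegrableOn f B := hf.continuousOn.integrableOn_compact (isCompact_closedBall 0 r)
  have hB : volume B ≠ 0 := (measure_closedBall_pos volume 0 hr).ne'
  have : NeZero (volume.restrict B) := ⟨Measure.restrict_eq_zero.not.mpr hB⟩
  rw [hgauss, hgauss, mul_div_mul_left _ _ (by positivity),
    div_le_div_iff₀ (integral_exp_pos hfB) (ENNReal.toReal_pos hB measure_closedBall_lt_top.ne),
    mul_comm (volume _).toReal]
  refine setIntegral_mul_measureReal_le_of_superlevel (fun x => (Real.exp_pos _).le)
    hf.measurable hfB (measure_ne_top_of_subset sdiff_subset measure_closedBall_lt_top.ne)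
    fun t ht => ?_
  obtain ⟨ρ, hρ⟩ := exists_setOf_le_exp_neg_mul_sq_norm_eq_closedBall
    (E := EuclideanSpace ℝ (Fin n)) (by positivity : 0 < Real.pi / s ^ 2) ht
  rw [hρ]
  exact (hK.starConvex h0).measure_inter_closedBall_diff_mul_le volume h0 ρ hr
end

section
/- Let Λ ⊆ ℝⁿ be a full-rank lattice, let w ∈ ℝⁿ and r > 0. If there exist two distinct points of Λ at Euclidean distance at most r from w, then there exist y, y' ∈ Λ with ‖y - w‖ ≤ r, ‖y' - w‖ ≤ r, and y - y' ∉ 2Λ (i.e., y and y' are distinct modulo 2Λ). In particular, if y₁, y₂ ∈ Λ are distinct, ‖y₁ - w‖ ≤ r, ‖y₂ - w‖ ≤ r, and y₁ - y₂ ∈ 2Λ, then the midpoint (y₁+y₂)/2 lies in Λ, has distance at most r from w, and satisfies ‖(y₁+y₂)/2 - w‖ < max(‖y₁-w‖, ‖y₂-w‖). -/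
/-!
If `y - y' = 2u` with `u ∈ Λ`, the midpoint of `y` and `y'` is the lattice point `y' + u`, at half
the distance from `y'`, and by strict convexity of the Euclidean norm strictly closer to `w` than
the farther of the two. Since a ball contains only finitely many lattice points, a pair of distinct
lattice points in it at minimal distance from each other cannot be congruent modulo `2Λ`.
-/

open Set Submodule

theorem Submodule.coe_span_int_range_eq_setOf {ι E : Type*} [Fintype ι] [AddCommGroup E]
    [Module ℝ E] (v : ι → E) :
    (span ℤ (range v) : Set E) = {x | ∃ z : ι → ℤ, x = ∑ i, (z i : ℝ) • v i} := by
  ext x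
  simp only [SetLike.mem_coe, mem_span_range_iff_exists_fun, Int.cast_smul_eq_zsmul, eq_comm]
  rfl

theorem half_smul_add_eq_add_of_sub_eq_two_smul {K E : Type*} [Field K] [CharZero K]
    [AddCommGroup E] [Module K E] {y₁ y₂ u : E} (h : y₁ - y₂ = (2 : K) • u) :
    (1 / 2 : K) • (y₁ + y₂) = y₂ + u := by
  rw [eq_add_of_sub_eq' h]
  module

theorem norm_half_smul_add_sub_lt_max {E : Type*} [NormedAddCommGroup E] [NormedSpace ℝ E]
    [StrictConvexSpace ℝ E] (w : E) {y₁ y₂ : E} (hne : y₁ ≠ y₂) :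
    ‖(1 / 2 : ℝ) • (y₁ + y₂) - w‖ < max ‖y₁ - w‖ ‖y₂ - w‖ := by
  have key := norm_combo_lt_of_ne (le_max_left ‖y₁ - w‖ ‖y₂ - w‖) (le_max_right _ _)
    (sub_left_injective.ne hne) one_half_pos one_half_pos (add_halves 1)
  convert key using 2
  module

theorem AddSubgroup.exists_sub_notMem_two_smul {E : Type*} [NormedAddCommGroup E]
    [NormedSpace ℝ E] (L : AddSubgroup E) {S : Set E} (hS : Convex ℝ S) (hfin : (S ∩ L).Finite)
    {y₁ y₂ : E} (h₁ : y₁ ∈ S ∩ L) (h₂ : y₂ ∈ S ∩ L) (hne : y₁ ≠ y₂) :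
    ∃ y ∈ S ∩ L, ∃ y' ∈ S ∩ L, ¬ ∃ u ∈ L, y - y' = (2 : ℝ) • u := by
  set P := {p : E × E | p.1 ∈ S ∩ L ∧ p.2 ∈ S ∩ L ∧ p.1 ≠ p.2}
  have hPfin : P.Finite := (hfin.prod hfin).subset fun p hp => ⟨hp.1, hp.2.1⟩
  obtain ⟨⟨y, y'⟩, ⟨hy, hy', hne'⟩, hmin⟩ :=
    P.exists_min_image (fun p => ‖p.1 - p.2‖) hPfin ⟨(y₁, y₂), h₁, h₂, hne⟩
  refine ⟨y, hy, y', hy', ?_⟩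
  rintro ⟨u, hu, hyu⟩
  have hu0 : u ≠ 0 := by rintro rfl; exact hne' (sub_eq_zero.1 (by simpa using hyu))
  have hmid := half_smul_add_eq_add_of_sub_eq_two_smul hyu
  have hmidS : y' + u ∈ S := by
    rw [← hmid, smul_add]
    exact hS hy.1 hy'.1 one_half_pos.le one_half_pos.le (add_halves 1)
  have hle := hmin (y' + u, y') ⟨⟨hmidS, L.add_mem hy'.2 hu⟩, hy', by simpa using hu0⟩
  rw [add_sub_cancel_left, hyu, norm_smul, Real.norm_two] at hle
  linarith [norm_pos_iff.2 hu0]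

theorem distinct_mod_two_lattice (n : ℕ) (Λ : Set (EuclideanSpace ℝ (Fin n)))
    (hΛ : IsLattice Λ) (w : EuclideanSpace ℝ (Fin n)) (r : ℝ) :
    ((∃ y₁ ∈ Λ, ∃ y₂ ∈ Λ, y₁ ≠ y₂ ∧ ‖y₁ - w‖ ≤ r ∧ ‖y₂ - w‖ ≤ r) →
      ∃ y ∈ Λ, ∃ y' ∈ Λ, ‖y - w‖ ≤ r ∧ ‖y' - w‖ ≤ r ∧
        ¬ ∃ u ∈ Λ, y - y' = (2 : ℝ) • u) ∧
    (∀ y₁ ∈ Λ, ∀ y₂ ∈ Λ, y₁ ≠ y₂ → ‖y₁ - w‖ ≤ r → ‖y₂ - w‖ ≤ r →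
      (∃ u ∈ Λ, y₁ - y₂ = (2 : ℝ) • u) →
        (1 / 2 : ℝ) • (y₁ + y₂) ∈ Λ ∧ ‖(1 / 2 : ℝ) • (y₁ + y₂) - w‖ ≤ r ∧
          ‖(1 / 2 : ℝ) • (y₁ + y₂) - w‖ < max ‖y₁ - w‖ ‖y₂ - w‖) := by
  obtain ⟨b, rfl⟩ := hΛ
  rw [← coe_span_int_range_eq_setOf]
  set L := (span ℤ (range b)).toAddSubgroup
  constructor
  · rintro ⟨y₁, h₁, y₂, h₂, hne, hr₁, hr₂⟩
    obtain ⟨y, ⟨hyr, hy⟩, y', ⟨hyr', hy'⟩, hcong⟩ :=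
      L.exists_sub_notMem_two_smul (convex_closedBall w r)
        (ZSpan.setFinite_inter b Metric.isBounded_closedBall)
        ⟨mem_closedBall_iff_norm.2 hr₁, h₁⟩ ⟨mem_closedBall_iff_norm.2 hr₂, h₂⟩ hne
    exact ⟨y, hy, y', hy', mem_closedBall_iff_norm.1 hyr, mem_closedBall_iff_norm.1 hyr', hcong⟩
  · rintro y₁ - y₂ h₂ hne hr₁ hr₂ ⟨u, hu, hyu⟩
    have hlt := norm_half_smul_add_sub_lt_max w hne
    rw [half_smul_add_eq_add_of_sub_eq_two_smul hyu] at hlt ⊢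
    exact ⟨L.add_mem h₂ hu, hlt.le.trans (max_le hr₁ hr₂), hlt⟩
end

section
/- Let Λ ⊆ ℝⁿ be a full-rank lattice with dual lattice Λ*, and for ε > 0 define the smoothing parameter η_ε(Λ) = inf{s > 0 : ρ_{1/s}(Λ* \ {0}) ≤ ε}. Then for every 0 < ε < 1 and every r ≥ 1, letting t = sqrt(1 + log(r)/log(1/ε)), one has η_{ε/r}(Λ) ≤ t · η_ε(Λ). -/
/-!
Since `ρ_{1/(ts)}(y) = ρ_{1/s}(y) ^ (t²)` and `∑ fᵖ ≤ (∑ f)ᵖ` for a summable nonnegative family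
and `p ≥ 1`, the bound `ρ_{1/s}(Λ* \ {0}) ≤ ε` gives `ρ_{1/(ts)}(Λ* \ {0}) ≤ ε ^ (t²) = ε / r`.
So multiplication by `t` maps the set whose infimum is `η_ε(Λ)` into the one defining
`η_{ε/r}(Λ)`. Summability over `Λ*` comes from the injection `y ↦ (⟪bᵢ, y⟫)ᵢ` of `Λ*` into `ℤⁿ`,
which distorts norms by at most a constant factor.
-/

open scoped RealInnerProductSpace

/-- The dual lattice `Λ* = {y : ⟨x, y⟩ ∈ ℤ for all x ∈ Λ}`. -/
def dualLattice {n : ℕ} (Λ : Set (EuclideanSpace ℝ (Fin n))) :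
    Set (EuclideanSpace ℝ (Fin n)) :=
  {y | ∀ x ∈ Λ, ∃ z : ℤ, ⟪x, y⟫ = (z : ℝ)}

/-- The smoothing parameter `η_ε(Λ) = inf {s > 0 : ρ_{1/s}(Λ* \ {0}) ≤ ε}`. -/
noncomputable def smoothingParam {n : ℕ} (Λ : Set (EuclideanSpace ℝ (Fin n))) (ε : ℝ) : ℝ :=
  sInf {s : ℝ | 0 < s ∧ rhoSet n (1 / s) (dualLattice Λ \ {0}) ≤ ε}

open Real Finset
open scoped Pointwise

lemma summable_exp_neg_mul_sq_int {a : ℝ} (ha : 0 < a) :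
    Summable fun k : ℤ => exp (-a * (k : ℝ) ^ 2) := by
  refine (summable_pow_mul_jacobiTheta₂_term_bound 0 (T := a / π) (by positivity) 0).congr
    fun k => ?_
  rw [pow_zero, one_mul]
  congr 1
  field_simp
  ring

lemma summable_pi_prod_of_nonneg {ι α : Type*} [Fintype ι] {f : ι → α → ℝ}
    (hf0 : ∀ i a, 0 ≤ f i a) (hf : ∀ i, Summable (f i)) :
    Summable fun x : ι → α => ∏ i, f i (x i) := by
  classical
  refine summable_of_sum_le (c := ∏ i, ∑' a, f i a)
    (fun x => prod_nonneg fun i _ => hf0 i _) fun s => ?_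
  calc ∑ x ∈ s, ∏ i, f i (x i)
      ≤ ∑ x ∈ Fintype.piFinset fun i => s.image (· i), ∏ i, f i (x i) :=
        sum_le_sum_of_subset_of_nonneg
          (fun x hx => Fintype.mem_piFinset.2 fun i => mem_image_of_mem _ hx)
          fun x _ _ => prod_nonneg fun i _ => hf0 i _
    _ = ∏ i, ∑ a ∈ s.image (· i), f i a := (prod_univ_sum _ _).symm
    _ ≤ ∏ i, ∑' a, f i a :=
        prod_le_prod (fun i _ => sum_nonneg fun a _ => hf0 i a)
          fun i _ => (hf i).sum_le_tsum _ fun a _ => hf0 i a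

lemma summable_exp_neg_mul_sum_sq {ι : Type*} [Fintype ι] {a : ℝ} (ha : 0 < a) :
    Summable fun z : ι → ℤ => exp (-a * ∑ i, (z i : ℝ) ^ 2) := by
  simpa only [mul_sum, exp_sum] using
    summable_pi_prod_of_nonneg (fun _ _ => (exp_pos _).le) fun _ => summable_exp_neg_mul_sq_int ha

lemma summable_exp_neg_mul_norm_sq_of_inner_int {ι E : Type*} [Fintype ι]
    [NormedAddCommGroup E] [InnerProductSpace ℝ E] (b : Module.Basis ι ℝ E) {A : Set E}
    (hA : ∀ y ∈ A, ∀ i, ∃ z : ℤ, ⟪b i, y⟫ = z) {a : ℝ} (ha : 0 < a) :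
    Summable fun y : A => exp (-a * ‖(y : E)‖ ^ 2) := by
  choose c hc using hA
  set C := 1 + ∑ i, ‖b i‖ ^ 2
  have hC : 0 < C := by positivity
  have hinj : Function.Injective fun y : A => c y y.2 := fun y y' h =>
    Subtype.ext <| InnerProductSpace.ext_inner_left_basis b fun i => by
      rw [hc y y.2, hc y' y'.2]; exact congrArg (fun z : ι → ℤ => (z i : ℝ)) h
  have hbound (y : A) : ∑ i, (c y y.2 i : ℝ) ^ 2 ≤ C * ‖(y : E)‖ ^ 2 :=
    calc ∑ i, (c y y.2 i : ℝ) ^ 2 = ∑ i, ⟪b i, (y : E)⟫ ^ 2 :=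
          sum_congr rfl fun i _ => by rw [hc y y.2 i]
      _ ≤ ∑ i, ‖b i‖ ^ 2 * ‖(y : E)‖ ^ 2 := sum_le_sum fun i _ => by
          rw [← mul_pow, ← sq_abs]
          exact pow_le_pow_left₀ (abs_nonneg _) (abs_real_inner_le_norm _ _) 2
      _ ≤ C * ‖(y : E)‖ ^ 2 := by rw [← sum_mul]; gcongr; linarith
  refine ((summable_exp_neg_mul_sum_sq (div_pos ha hC)).comp_injective hinj).of_nonneg_of_le
    (fun _ => (exp_pos _).le) fun y => exp_le_exp.2 ?_
  have := mul_le_mul_of_nonneg_left (hbound y) (div_pos ha hC).le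
  have hcancel : a / C * (C * ‖(y : E)‖ ^ 2) = a * ‖(y : E)‖ ^ 2 := by field_simp
  linarith

lemma IsLattice.summable_exp_neg_mul_norm_sq_dualLattice {n : ℕ}
    {Λ : Set (EuclideanSpace ℝ (Fin n))} (hΛ : IsLattice Λ) {a : ℝ} (ha : 0 < a) :
    Summable fun y : dualLattice Λ => exp (-a * ‖(y : EuclideanSpace ℝ (Fin n))‖ ^ 2) := by
  obtain ⟨b, rfl⟩ := hΛ
  refine summable_exp_neg_mul_norm_sq_of_inner_int b
    (fun y (hy : ∀ x ∈ _, _) i => hy (b i) ?_) ha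
  exact ⟨Pi.single i 1, by simp [Pi.single_apply]⟩

lemma tsum_rpow_le_rpow_tsum {α : Type*} {f : α → ℝ} (hf0 : ∀ a, 0 ≤ f a) (hf : Summable f)
    {p : ℝ} (hp : 1 ≤ p) : ∑' a, f a ^ p ≤ (∑' a, f a) ^ p := by
  set S := ∑' a, f a
  have hS : 0 ≤ S := tsum_nonneg hf0
  have hsplit {x : ℝ} (hx : 0 ≤ x) : x ^ p = x ^ (p - 1) * x := by
    rw [← rpow_add_one' hx (by linarith), sub_add_cancel]
  have hle (a : α) : f a ^ p ≤ S ^ (p - 1) * f a := by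
    rw [hsplit (hf0 a)]
    exact mul_le_mul_of_nonneg_right
      (rpow_le_rpow (hf0 a) (hf.le_tsum a fun b _ => hf0 b) (by linarith)) (hf0 a)
  calc ∑' a, f a ^ p ≤ ∑' a, S ^ (p - 1) * f a :=
        (hf.mul_left _).of_nonneg_of_le (fun a => rpow_nonneg (hf0 a) p) hle |>.tsum_le_tsum hle
          (hf.mul_left _)
    _ = S ^ p := by rw [tsum_mul_left, hsplit hS]

lemma rhoSet_one_div (n : ℕ) (s : ℝ) (A : Set (EuclideanSpace ℝ (Fin n))) :
    rhoSet n (1 / s) A = ∑' x : A, exp (-(π * s ^ 2) * ‖(x : EuclideanSpace ℝ (Fin n))‖ ^ 2) :=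
  tsum_congr fun x => by rw [one_div, inv_pow, div_inv_eq_mul]; ring_nf

lemma rhoSet_one_div_mul_le_rpow {n : ℕ} {A : Set (EuclideanSpace ℝ (Fin n))} {s t : ℝ}
    (hA : Summable fun x : A => exp (-(π * s ^ 2) * ‖(x : EuclideanSpace ℝ (Fin n))‖ ^ 2))
    (ht : 1 ≤ t ^ 2) :
    rhoSet n (1 / (t * s)) A ≤ rhoSet n (1 / s) A ^ (t ^ 2) := by
  rw [rhoSet_one_div, rhoSet_one_div]
  calc ∑' x : A, exp (-(π * (t * s) ^ 2) * ‖(x : EuclideanSpace ℝ (Fin n))‖ ^ 2)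
      = ∑' x : A, exp (-(π * s ^ 2) * ‖(x : EuclideanSpace ℝ (Fin n))‖ ^ 2) ^ (t ^ 2) :=
        tsum_congr fun x => by rw [← exp_mul]; ring_nf
    _ ≤ _ := tsum_rpow_le_rpow_tsum (fun _ => (exp_pos _).le) hA ht

lemma rpow_one_add_log_div_log_one_div {ε r : ℝ} (hε : 0 < ε) (hε1 : ε ≠ 1) (hr : 0 < r) :
    ε ^ (1 + log r / log (1 / ε)) = ε / r := by
  have hlog : log ε ≠ 0 := log_ne_zero_of_pos_of_ne_one hε hε1
  have hexp : log ε * (log r / -log ε) = -log r := by field_simp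
  rw [rpow_add hε, rpow_one, rpow_def_of_pos hε, one_div, log_inv, hexp, exp_neg, exp_log hr,
    div_eq_mul_inv]

lemma Real.sInf_le_mul_sInf_of_smul_subset {S T : Set ℝ} {t : ℝ} (ht : 0 ≤ t)
    (hT : BddBelow T) (hTS : T ⊆ S) (hST : t • S ⊆ T) : sInf T ≤ t * sInf S := by
  rcases S.eq_empty_or_nonempty with rfl | hS
  · simp [Set.subset_empty_iff.1 hTS]
  · rw [← smul_eq_mul, ← Real.sInf_smul_of_nonneg ht]
    exact csInf_le_csInf hT (hS.smul_set) hST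

theorem smoothing_param_monotone (n : ℕ) (Λ : Set (EuclideanSpace ℝ (Fin n)))
    (hΛ : IsLattice Λ) (ε : ℝ) (hε0 : 0 < ε) (hε1 : ε < 1) (r : ℝ) (hr : 1 ≤ r) :
    smoothingParam Λ (ε / r) ≤
      Real.sqrt (1 + Real.log r / Real.log (1 / ε)) * smoothingParam Λ ε := by
  set t := √(1 + log r / log (1 / ε))
  have hq : 0 ≤ log r / log (1 / ε) :=
    div_nonneg (log_nonneg hr) (log_pos (one_lt_one_div hε0 hε1)).le
  have ht2 : t ^ 2 = 1 + log r / log (1 / ε) := sq_sqrt (by linarith)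
  have hεt : ε ^ (t ^ 2) = ε / r := by
    rw [ht2]; exact rpow_one_add_log_div_log_one_div hε0 hε1.ne (by linarith)
  refine Real.sInf_le_mul_sInf_of_smul_subset (sqrt_nonneg _) ⟨0, fun s hs => hs.1.le⟩
    (fun s hs => ⟨hs.1, hs.2.trans (div_le_self hε0.le hr)⟩) ?_
  rintro _ ⟨s, ⟨hs, hρ⟩, rfl⟩
  have hsum := (hΛ.summable_exp_neg_mul_norm_sq_dualLattice (a := π * s ^ 2)
    (by positivity)).comp_injective (Set.inclusion_injective (Set.sdiff_subset (t := {0})))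
  refine ⟨mul_pos (sqrt_pos.2 (by linarith)) hs, ?_⟩
  calc rhoSet n (1 / (t * s)) (dualLattice Λ \ {0})
      ≤ rhoSet n (1 / s) (dualLattice Λ \ {0}) ^ (t ^ 2) :=
        rhoSet_one_div_mul_le_rpow hsum (by linarith)
    _ ≤ ε ^ (t ^ 2) := rpow_le_rpow (tsum_nonneg fun _ => (exp_pos _).le) hρ (by positivity)
    _ = ε / r := hεt
end
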